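/- Let G = {m₁, …, m_q, n₁, n₂} be a 2-semidominant set of monomials (each m_i dominant, n₁ and n₂ nondominant with respect to G). If L₁, L₂ ⊆ G satisfy lcm(L₁) = lcm(L₂) and |L₂| = |L₁| + 1, then L₁ ⊆ L₂ (so L₂ is obtained from L₁ by adding one nondominant element). -/

import Mathlib

/-!
An element `m` dominant in `G` is witnessed by a variable `x` and a threshold `k` that only `m`
reaches among the elements of `G`; hence for `L ⊆ G`, `m ∈ L` iff the `x`-exponent of `lcm L` is
at least `k`. So two subsets of `G` with the same lcm contain the same dominant elements and can
differ only in the two nondominant ones. Their symmetric difference then has at most two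
elements, while it has odd size `2 * #(L₁ \ L₂) + 1`; hence `L₁ \ L₂ = ∅`.
-/

open Finset
open scoped symmDiff

variable {X : Type*} [DecidableEq X]

/-- The lcm of a finite set of monomials (monomials = finitely supported
exponent functions): pointwise maximum of exponents. -/
noncomputable def mlcm (L : Finset (X →₀ ℕ)) : X →₀ ℕ := L.sup id

/-- `m` is dominant with respect to `G`: some variable `x` appears in `m`
with exponent at least `k > 0` while every other element of `G` has
`x`-exponent `< k`. -/
def Dominant (G : Finset (X →₀ ℕ)) (m : X →₀ ℕ) : Prop :=
  ∃ x : X, ∃ k : ℕ, 0 < k ∧ k ≤ m x ∧ ∀ m' ∈ G, m' ≠ m → m' x < k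

/-- Total degree of a monomial: sum of its exponents. -/
def mdeg (m : X →₀ ℕ) : ℕ := m.sum fun _ e => e

theorem Finset.subset_of_card_symmDiff_le_two {α : Type*} [DecidableEq α] {s t : Finset α}
    (hst : #(s ∆ t) ≤ 2) (hcard : #t = #s + 1) : s ⊆ t := by
  have hsymm : #(s ∆ t) = #(s \ t) + #(t \ s) := by
    rw [symmDiff_def, sup_eq_union, card_union_of_disjoint disjoint_sdiff_sdiff]
  have hsdiff : #(t \ s) = #(s \ t) + 1 := by
    have := card_sdiff_add_card_inter s t
    have := card_sdiff_add_card_inter t s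
    rw [inter_comm] at this
    omega
  rw [← sdiff_eq_empty_iff_subset, ← card_eq_zero]
  omega

theorem mlcm_apply (L : Finset (X →₀ ℕ)) (x : X) : mlcm L x = L.sup (· x) := by
  induction L using Finset.induction_on with
  | empty => rfl
  | insert m L _ ih => simp [mlcm, Finsupp.sup_apply, ← ih]

theorem Dominant.mem_iff_mem_of_mlcm_eq {G L₁ L₂ : Finset (X →₀ ℕ)} {m : X →₀ ℕ}
    (hm : Dominant G m) (hL₁ : L₁ ⊆ G) (hL₂ : L₂ ⊆ G) (hlcm : mlcm L₁ = mlcm L₂) :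
    m ∈ L₁ ↔ m ∈ L₂ := by
  obtain ⟨x, k, hk, hkm, hlt⟩ := hm
  have mem_iff : ∀ L ⊆ G, m ∈ L ↔ k ≤ mlcm L x := by
    intro L hLG
    rw [mlcm_apply, Finset.le_sup_iff hk]
    refine ⟨fun hmL => ⟨m, hmL, hkm⟩, fun ⟨m', hm'L, hkm'⟩ => ?_⟩
    by_contra hmL
    exact (hlt m' (hLG hm'L) (ne_of_mem_of_not_mem hm'L hmL)).not_ge hkm'
  rw [mem_iff L₁ hL₁, mem_iff L₂ hL₂, hlcm]

theorem two_semidominant_consecutive_general (G : Finset (X →₀ ℕ)) (n₁ n₂ : X →₀ ℕ)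
    (hdom : ∀ m ∈ G, m ≠ n₁ → m ≠ n₂ → Dominant G m)
    (L₁ L₂ : Finset (X →₀ ℕ)) (hL1 : L₁ ⊆ G) (hL2 : L₂ ⊆ G)
    (hlcm : mlcm L₁ = mlcm L₂) (hcard : L₂.card = L₁.card + 1) :
    L₁ ⊆ L₂ := by
  have hsymm : L₁ ∆ L₂ ⊆ {n₁, n₂} := by
    intro m hm
    have hmG : m ∈ G := (mem_union.mp (symmDiff_subset_union hm)).elim (@hL1 m) (@hL2 m)
    by_contra hmn
    simp only [mem_insert, mem_singleton, not_or] at hmn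
    have := (hdom m hmG hmn.1 hmn.2).mem_iff_mem_of_mlcm_eq hL1 hL2 hlcm
    rw [mem_symmDiff] at hm
    tauto
  exact subset_of_card_symmDiff_le_two ((card_le_card hsymm).trans card_le_two) hcard

theorem two_semidominant_consecutive (G : Finset (X →₀ ℕ)) (n₁ n₂ : X →₀ ℕ)
    (h1 : n₁ ∈ G) (h2 : n₂ ∈ G) (hne : n₁ ≠ n₂)
    (hnd1 : ¬ Dominant G n₁) (hnd2 : ¬ Dominant G n₂)
    (hdom : ∀ m ∈ G, m ≠ n₁ → m ≠ n₂ → Dominant G m)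
    (L₁ L₂ : Finset (X →₀ ℕ)) (hL1 : L₁ ⊆ G) (hL2 : L₂ ⊆ G)
    (hlcm : mlcm L₁ = mlcm L₂) (hcard : L₂.card = L₁.card + 1) :
    L₁ ⊆ L₂ :=
  two_semidominant_consecutive_general G n₁ n₂ hdom L₁ L₂ hL1 hL2 hlcm hcard
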